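/- Let $\mathcal{K}$ be a locally small category (objects in a universe $u$, hom-sets in a universe $v$). If $\mathcal{K}$ is concrete, i.e. admits a faithful functor into the category of $v$-small types, then for every object $A$ of $\mathcal{K}$ the class of generalized regular quotients of $A$ is small: the quotient of the class of all morphisms with domain $A$ by the relation $\simeq$ is $v$-small. -/

import Mathlib

/-!
A faithful functor `F : K ⥤ Type v` lets one test `u ≫ f = v ≫ f` on elements: it holds iff
`F.map f` identifies `F.map u x` and `F.map v x` for every `x`. Hence whether `f` coequalizes
a pair `u, v` depends only on the kernel of the function `F.map f`, and `f ≃ g` holds as soon as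
these kernels agree. The generalized regular quotients of `A` are therefore indexed by (some of)
the equivalence relations on the `v`-small type `F.obj A`.
-/

universe v u

open CategoryTheory

theorem small_quot_of_ker_le {α β : Type*} [Small.{v} β] (r : α → α → Prop) (ψ : α → β)
    (hψ : ∀ a b, ψ a = ψ b → r a b) : Small.{v} (Quot r) :=
  have : Small.{v} (Quotient (Setoid.ker ψ)) := small_of_injective (Setoid.kerLift_injective ψ)
  small_of_surjective (α := Quotient (Setoid.ker ψ)) <|
    Quot.map_surjective (ra := Setoid.ker ψ) (f := id) hψ Function.surjective_id

namespace CategoryTheory.Functor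

variable {C : Type*} [Category C] (F : C ⥤ Type*) [F.Faithful]

theorem comp_eq_comp_iff_map_apply {A B X : C} (u v : B ⟶ A) (f : A ⟶ X) :
    u ≫ f = v ≫ f ↔ ∀ x, F.map f (F.map u x) = F.map f (F.map v x) := by
  simp only [← F.map_injective.eq_iff, F.map_comp, ConcreteCategory.hom_ext_iff,
    types_comp_apply]

theorem comp_eq_comp_iff_of_ker_map_eq {A X Y : C} {f : A ⟶ X} {g : A ⟶ Y}
    (h : Setoid.ker (F.map f) = Setoid.ker (F.map g)) {B : C} (u v : B ⟶ A) :
    u ≫ f = v ≫ f ↔ u ≫ g = v ≫ g := by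
  rw [F.comp_eq_comp_iff_map_apply, F.comp_eq_comp_iff_map_apply]
  exact forall_congr' fun x => Setoid.ext_iff.mp h _ _

end CategoryTheory.Functor

theorem co_freyd_condition {K : Type u} [Category.{v} K]
    (hconcrete : ∃ F : K ⥤ Type v, F.Faithful) (A : K) :
    Small.{v} (Quot (fun (f g : Σ X : K, A ⟶ X) =>
      ∀ (B : K) (u v : B ⟶ A), (u ≫ f.2 = v ≫ f.2) ↔ (u ≫ g.2 = v ≫ g.2))) := by
  obtain ⟨F, hF⟩ := hconcrete
  exact small_quot_of_ker_le _ (fun f => Setoid.ker (F.map f.2))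
    fun _ _ h _ u v => F.comp_eq_comp_iff_of_ker_map_eq h u v
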